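/- Let M ⊆ S_k^n be a (⊓,⊔)-closed set. Then there exist positive integers k̃ and ñ, a normalized (⊓,⊔)-closed set M' ⊆ S_{k̃}^{ñ}, and a bijection φ : M → M' such that for all x, y ∈ M: x ⪯ y iff φ(x) ⪯ φ(y), and x ⌣ y iff φ(x) ⌣ φ(y). -/
import Mathlib


/-- The partial order on `S_k = {0,1,…,k}`: `a ⪯ b` iff `a = 0` or `a = b`. -/
def pre {k : ℕ} (a b : Fin (k + 1)) : Prop := a = 0 ∨ a = b

instance {k : ℕ} (a b : Fin (k + 1)) : Decidable (pre a b) :=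
  decidable_of_iff (a = 0 ∨ a = b) Iff.rfl

/-- The componentwise order `⪯` on `S_k^n`. -/
def preV {k n : ℕ} (x y : Fin n → Fin (k + 1)) : Prop := ∀ i, pre (x i) (y i)

/-- The operation `⊓` on `S_k^n`. -/
def sqcap {k n : ℕ} (x y : Fin n → Fin (k + 1)) : Fin n → Fin (k + 1) :=
  fun i => if pre (x i) (y i) ∨ pre (y i) (x i) then min (x i) (y i) else 0

/-- The operation `⊔` on `S_k^n`. -/
def sqcup {k n : ℕ} (x y : Fin n → Fin (k + 1)) : Fin n → Fin (k + 1) :=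
  fun i => if pre (x i) (y i) ∨ pre (y i) (x i) then max (x i) (y i) else 0

/-- A `(⊓,⊔)`-closed subset of `S_k^n`. -/
def closedSet {k n : ℕ} (M : Set (Fin n → Fin (k + 1))) : Prop :=
  M.Nonempty ∧ ∀ x ∈ M, ∀ y ∈ M, sqcap x y ∈ M ∧ sqcup x y ∈ M

/-- Strict version of `⪯`. -/
def strictPreV {k n : ℕ} (x y : Fin n → Fin (k + 1)) : Prop := preV x y ∧ x ≠ y

/-- `m` is the minimum element of `M` with respect to `⪯`. -/
def isMinOf {k n : ℕ} (M : Set (Fin n → Fin (k + 1))) (m : Fin n → Fin (k + 1)) : Prop :=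
  m ∈ M ∧ ∀ x ∈ M, preV m x

/-- `u` is the least upper bound of `S` inside `(M, ⪯)`. -/
def isLUBof {k n : ℕ} (M S : Set (Fin n → Fin (k + 1))) (u : Fin n → Fin (k + 1)) : Prop :=
  u ∈ M ∧ (∀ s ∈ S, preV s u) ∧ ∀ w ∈ M, (∀ s ∈ S, preV s w) → preV u w

/-- `x` is a join-irreducible element of `M`. -/
def joinIrr {k n : ℕ} (M : Set (Fin n → Fin (k + 1))) (x : Fin n → Fin (k + 1)) : Prop :=
  x ∈ M ∧ ¬ isMinOf M x ∧ ¬ isLUBof M {y | y ∈ M ∧ strictPreV y x} x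

/-- A `(⊓,⊔)`-closed set is simple if its minimum element is the all-zero vector. -/
def simpleSet {k n : ℕ} (M : Set (Fin n → Fin (k + 1))) : Prop :=
  isMinOf M (fun _ => 0)

/-- `y` is a lower cover of `x` in `M`. -/
def lowerCover {k n : ℕ} (M : Set (Fin n → Fin (k + 1)))
    (y x : Fin n → Fin (k + 1)) : Prop :=
  y ∈ M ∧ strictPreV y x ∧ ¬ ∃ z ∈ M, strictPreV y z ∧ strictPreV z x

/-- `d` is the differential of `x` in `M` (with respect to some lower cover of `x`). -/
def isDiff {k n : ℕ} (M : Set (Fin n → Fin (k + 1)))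
    (x d : Fin n → Fin (k + 1)) : Prop :=
  ∃ y, lowerCover M y x ∧ ∀ i, d i = if x i ≠ 0 ∧ y i = 0 then x i else 0

/-- The support of `x ∈ S_k^n`. -/
def supp {k n : ℕ} (x : Fin n → Fin (k + 1)) : Set (Fin n) := {i | x i ≠ 0}

/-- `x ⌣ y`: `x` and `y` have no common upper bound in `S_k^n`. -/
def incons {k n : ℕ} (x y : Fin n → Fin (k + 1)) : Prop :=
  ∃ i, x i ≠ 0 ∧ y i ≠ 0 ∧ x i ≠ y i

/-- A simple `(⊓,⊔)`-closed set is normalized if the differential of every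
join-irreducible element has exactly one nonzero component. -/
def normalizedSet {k n : ℕ} (M : Set (Fin n → Fin (k + 1))) : Prop :=
  simpleSet M ∧ ∀ x, joinIrr M x → ∃ d, isDiff M x d ∧ ∃! i, d i ≠ 0

section Helpers

variable {k n : ℕ}

lemma pre_zero (b : Fin (k + 1)) : pre 0 b := Or.inl rfl

lemma pre_refl (a : Fin (k + 1)) : pre a a := Or.inr rfl

lemma pre_of_ne_zero {a b : Fin (k + 1)} (h : pre a b) (ha : a ≠ 0) : a = b :=
  h.resolve_left ha

lemma cap_eq (a b : Fin (k + 1)) :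
    (if pre a b ∨ pre b a then min a b else 0) = if a = b then a else 0 := by
  by_cases hab : a = b
  · subst hab
    rw [if_pos (Or.inl (pre_refl a)), min_self, if_pos rfl]
  · rw [if_neg hab]
    by_cases ha : a = 0
    · subst ha
      rw [if_pos (Or.inl (pre_zero b))]
      exact min_eq_left (Fin.zero_le b)
    · by_cases hb : b = 0
      · subst hb
        rw [if_pos (Or.inr (pre_zero a))]
        exact min_eq_right (Fin.zero_le a)
      · rw [if_neg]
        rintro (h | h)
        · exact hab (pre_of_ne_zero h ha)
        · exact hab (pre_of_ne_zero h hb).symm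

lemma cup_eq (a b : Fin (k + 1)) :
    (if pre a b ∨ pre b a then max a b else 0) =
      if a = b then a else if a = 0 then b else if b = 0 then a else 0 := by
  by_cases hab : a = b
  · subst hab
    rw [if_pos (Or.inl (pre_refl a)), max_self, if_pos rfl]
  · rw [if_neg hab]
    by_cases ha : a = 0
    · subst ha
      rw [if_pos (Or.inl (pre_zero b)), if_pos rfl]
      exact max_eq_right (Fin.zero_le b)
    · rw [if_neg ha]
      by_cases hb : b = 0
      · subst hb
        rw [if_pos (Or.inr (pre_zero a)), if_pos rfl]
        exact max_eq_left (Fin.zero_le a)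
      · rw [if_neg hb, if_neg]
        rintro (h | h)
        · exact hab (pre_of_ne_zero h ha)
        · exact hab (pre_of_ne_zero h hb).symm

lemma sqcap_apply (x y : Fin n → Fin (k + 1)) (i : Fin n) :
    sqcap x y i = if x i = y i then x i else 0 := cap_eq _ _

lemma sqcup_apply (x y : Fin n → Fin (k + 1)) (i : Fin n) :
    sqcup x y i = if x i = y i then x i else
      if x i = 0 then y i else if y i = 0 then x i else 0 := cup_eq _ _

lemma preV_refl (x : Fin n → Fin (k + 1)) : preV x x := fun _ => pre_refl _

lemma preV_trans {x y z : Fin n → Fin (k + 1)} (h1 : preV x y) (h2 : preV y z) :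
    preV x z := by
  intro i
  rcases h1 i with h | h
  · exact Or.inl h
  · rw [h]; exact h2 i

lemma preV_antisymm {x y : Fin n → Fin (k + 1)} (h1 : preV x y) (h2 : preV y x) :
    x = y := by
  funext i
  rcases h1 i with h | h
  · rcases h2 i with h' | h'
    · rw [h, h']
    · exact h'.symm
  · exact h

lemma sqcap_le_left {x y : Fin n → Fin (k + 1)} : preV (sqcap x y) x := by
  intro i
  rw [sqcap_apply]
  split
  · exact pre_refl _
  · exact pre_zero _

lemma sqcap_le_right {x y : Fin n → Fin (k + 1)} : preV (sqcap x y) y := by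
  intro i
  rw [sqcap_apply]
  split
  · next h => rw [h]; exact pre_refl _
  · exact pre_zero _

lemma le_sqcap {z x y : Fin n → Fin (k + 1)} (h1 : preV z x) (h2 : preV z y) :
    preV z (sqcap x y) := by
  intro i
  rw [sqcap_apply]
  rcases h1 i with h | h
  · exact Or.inl h
  · rcases h2 i with h' | h'
    · exact Or.inl h'
    · rw [if_pos (h.symm.trans h')]
      exact Or.inr h

lemma exists_min {M : Set (Fin n → Fin (k + 1))} (hM : closedSet M) :
    ∃ m ∈ M, ∀ z ∈ M, preV m z := by
  classical
  obtain ⟨a, ha⟩ := hM.1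
  have key : ∀ F : Finset (Fin n → Fin (k + 1)), ∃ m ∈ M, ∀ z ∈ F, z ∈ M → preV m z := by
    intro F
    induction F using Finset.induction_on with
    | empty => exact ⟨a, ha, fun z hz _ => by simp at hz⟩
    | @insert b F hb ih =>
      obtain ⟨m, hmM, hm⟩ := ih
      by_cases hbM : b ∈ M
      · refine ⟨sqcap m b, (hM.2 m hmM b hbM).1, ?_⟩
        intro z hz hzM
        rcases Finset.mem_insert.mp hz with h | h
        · subst h; exact sqcap_le_right
        · exact preV_trans sqcap_le_left (hm z h hzM)
      · refine ⟨m, hmM, ?_⟩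
        intro z hz hzM
        rcases Finset.mem_insert.mp hz with h | h
        · subst h; exact absurd hzM hbM
        · exact hm z h hzM
  obtain ⟨m, hmM, hm⟩ := key (Set.toFinite M).toFinset
  exact ⟨m, hmM, fun z hz => hm z ((Set.Finite.mem_toFinset _).mpr hz) hz⟩

lemma exists_maximal {S : Set (Fin n → Fin (k + 1))} (hS : S.Nonempty) :
    ∃ m ∈ S, ∀ z ∈ S, preV m z → z = m := by
  classical
  set r : (Fin n → Fin (k + 1)) → ℕ :=
    fun z => (Finset.univ.filter fun i => z i ≠ 0).card with hr
  obtain ⟨m, hmS, hmax⟩ := Finset.exists_max_image (Set.toFinite S).toFinset r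
    ((Set.Finite.toFinset_nonempty _).mpr hS)
  refine ⟨m, (Set.Finite.mem_toFinset _).mp hmS, fun z hz hpre => ?_⟩
  by_contra hne
  have hsub : (Finset.univ.filter fun i => m i ≠ 0) ⊂ (Finset.univ.filter fun i => z i ≠ 0) := by
    rw [Finset.ssubset_iff_of_subset]
    · obtain ⟨i, hi⟩ : ∃ i, m i ≠ z i := by
        by_contra h
        push_neg at h
        exact hne (funext fun i => (h i).symm) -- z = m
      have hm0 : m i = 0 := (hpre i).resolve_right hi
      have hz0 : z i ≠ 0 := by
        intro h
        exact hi (hm0.trans h.symm)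
      refine ⟨i, ?_, ?_⟩
      · simp [hz0]
      · simp [hm0]
    · intro i hi
      simp only [Finset.mem_filter, Finset.mem_univ, true_and] at hi ⊢
      intro h
      exact hi (((hpre i).resolve_left hi).trans h)
  have := Finset.card_lt_card hsub
  have := hmax z ((Set.Finite.mem_toFinset _).mpr hz)
  simp only [hr] at this
  omega

lemma exists_cover {M : Set (Fin n → Fin (k + 1))} {z x : Fin n → Fin (k + 1)}
    (hz : z ∈ M) (hx : x ∈ M) (hzx : strictPreV z x) :
    ∃ y, lowerCover M y x ∧ preV z y := by
  obtain ⟨m, hmS, hmax⟩ := exists_maximal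
    (S := {w | w ∈ M ∧ preV z w ∧ strictPreV w x}) ⟨z, hz, preV_refl z, hzx⟩
  refine ⟨m, ⟨hmS.1, hmS.2.2, ?_⟩, hmS.2.1⟩
  rintro ⟨w, hwM, hmw, hwx⟩
  have hwS : w ∈ {w | w ∈ M ∧ preV z w ∧ strictPreV w x} :=
    ⟨hwM, preV_trans hmS.2.1 hmw.1, hwx⟩
  exact hmw.2 (hmax w hwS hmw.1).symm

lemma cover_unique {M : Set (Fin n → Fin (k + 1))} (hM : closedSet M)
    {x : Fin n → Fin (k + 1)} (hx : joinIrr M x)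
    {y₁ y₂ : Fin n → Fin (k + 1)} (h1 : lowerCover M y₁ x) (h2 : lowerCover M y₂ x) :
    y₁ = y₂ := by
  by_contra hne
  apply hx.2.2
  refine ⟨hx.1, fun s hs => hs.2.1, fun w hw hub => ?_⟩
  have hvM : sqcap w x ∈ M := (hM.2 w hw x hx.1).1
  have hvx : preV (sqcap w x) x := sqcap_le_right
  by_cases hvx' : sqcap w x = x
  · rw [← hvx']
    exact sqcap_le_left
  · exfalso
    have hy1v : preV y₁ (sqcap w x) := le_sqcap (hub y₁ ⟨h1.1, h1.2.1⟩) h1.2.1.1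
    have hy2v : preV y₂ (sqcap w x) := le_sqcap (hub y₂ ⟨h2.1, h2.2.1⟩) h2.2.1.1
    have e1 : sqcap w x = y₁ := by
      by_contra h
      exact h1.2.2 ⟨sqcap w x, hvM, ⟨hy1v, fun e => h e.symm⟩, hvx, hvx'⟩
    have e2 : sqcap w x = y₂ := by
      by_contra h
      exact h2.2.2 ⟨sqcap w x, hvM, ⟨hy2v, fun e => h e.symm⟩, hvx, hvx'⟩
    exact hne (e1.symm.trans e2)

lemma pred_le_cover {M : Set (Fin n → Fin (k + 1))} (hM : closedSet M)
    {x y : Fin n → Fin (k + 1)} (hx : joinIrr M x) (hy : lowerCover M y x)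
    {z : Fin n → Fin (k + 1)} (hz : z ∈ M) (h : strictPreV z x) : preV z y := by
  obtain ⟨y', hy', hzy'⟩ := exists_cover hz hx.1 h
  rwa [cover_unique hM hx hy' hy] at hzy'

end Helpers

lemma norm_ind (k : ℕ) :
    ∀ n, 0 < n → ∀ M : Set (Fin n → Fin (k + 1)), closedSet M → simpleSet M →
      ∃ n', 0 < n' ∧
        ∃ (M' : Set (Fin n' → Fin (k + 1)))
          (φ : (Fin n → Fin (k + 1)) → (Fin n' → Fin (k + 1))),
          closedSet M' ∧ normalizedSet M' ∧ Set.BijOn φ M M' ∧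
            ∀ x ∈ M, ∀ y ∈ M,
              (preV x y ↔ preV (φ x) (φ y)) ∧ (incons x y ↔ incons (φ x) (φ y)) := by
  intro n
  induction n using Nat.strong_induction_on with
  | _ n IH =>
  intro hn M hM hs
  by_cases hnorm : normalizedSet M
  · exact ⟨n, hn, M, id, hM, hnorm, Set.bijOn_id M, fun x _ y _ => ⟨Iff.rfl, Iff.rfl⟩⟩
  have hbad : ∃ x, joinIrr M x ∧ ¬∃ d, isDiff M x d ∧ ∃! i, d i ≠ 0 := by
    by_contra h
    push_neg at h
    exact hnorm ⟨hs, h⟩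
  obtain ⟨x, hxJ, hxD⟩ := hbad
  have hxM := hxJ.1
  have h0M : (fun _ => (0 : Fin (k + 1))) ∈ M := hs.1
  have hxne0 : x ≠ fun _ => 0 := by
    rintro rfl
    exact hxJ.2.1 hs
  obtain ⟨y, hyC, -⟩ := exists_cover h0M hxM ⟨fun i => Or.inl rfl, fun h => hxne0 h.symm⟩
  -- the set of "gained" coordinates contains i₂
  have hGne : ∃ i, x i ≠ 0 ∧ y i = 0 := by
    by_contra hc
    push_neg at hc
    apply hyC.2.1.2
    funext i
    rcases hyC.2.1.1 i with h | h
    · by_cases hx0 : x i = 0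
      · rw [h, hx0]
      · exact absurd h (hc i hx0)
    · exact h
  obtain ⟨i₂, hxi₂, hyi₂⟩ := hGne
  -- there is a second gained coordinate i₁
  have htwo : ∃ i₁, (x i₁ ≠ 0 ∧ y i₁ = 0) ∧ i₁ ≠ i₂ := by
    by_contra hc
    push_neg at hc
    apply hxD
    refine ⟨fun i => if x i ≠ 0 ∧ y i = 0 then x i else 0, ⟨y, hyC, fun i => rfl⟩,
      i₂, ?_, ?_⟩
    · simpa [hxi₂, hyi₂] using hxi₂
    · intro j hj
      by_cases hjG : x j ≠ 0 ∧ y j = 0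
      · exact hc j hjG
      · simp only [if_neg hjG] at hj
        exact absurd rfl hj
  obtain ⟨i₁, ⟨hxi₁, hyi₁⟩, hne12⟩ := htwo
  -- the tie lemmas
  have tie1 : ∀ i i', (x i ≠ 0 ∧ y i = 0) → (x i' ≠ 0 ∧ y i' = 0) →
      ∀ z ∈ M, z i = x i → z i' = x i' := by
    intro i i' hi hi' z hz hzi
    have hwM : sqcap z x ∈ M := (hM.2 z hz x hxM).1
    have hwx : preV (sqcap z x) x := sqcap_le_right
    by_cases hwe : sqcap z x = x
    · have hxz : preV x z := by
        intro j
        by_cases hj : x j = 0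
        · exact Or.inl hj
        · right
          have hj' : sqcap z x j = x j := congrFun hwe j
          rw [sqcap_apply] at hj'
          by_cases h' : z j = x j
          · exact h'.symm
          · rw [if_neg h'] at hj'
            exact absurd hj'.symm hj
      rcases hxz i' with h | h
      · exact absurd h hi'.1
      · exact h.symm
    · exfalso
      have hwy : preV (sqcap z x) y := pred_le_cover hM hxJ hyC hwM ⟨hwx, hwe⟩
      have hwi : sqcap z x i = x i := by
        rw [sqcap_apply, if_pos hzi, hzi]
      rcases hwy i with h | h
      · exact hi.1 (hwi.symm.trans h)
      · exact hi.1 ((hwi.symm.trans h).trans hi.2)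
  have tie2 : ∀ i i', (x i ≠ 0 ∧ y i = 0) → (x i' ≠ 0 ∧ y i' = 0) →
      ∀ z ∈ M, z i ≠ 0 → z i' ≠ 0 := by
    intro i i' hi hi' z hz hzi
    by_cases hzx : z i = x i
    · rw [tie1 i i' hi hi' z hz hzx]
      exact hi'.1
    · intro hzi'0
      have huM : sqcup x z ∈ M := (hM.2 x hxM z hz).2
      have hui' : sqcup x z i' = x i' := by
        rw [sqcup_apply, if_neg (fun h => hi'.1 (h.trans hzi'0)), if_neg hi'.1,
          if_pos hzi'0]
      have hui : sqcup x z i = x i := tie1 i' i hi' hi _ huM hui'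
      rw [sqcup_apply, if_neg (fun h => hzx h.symm), if_neg hi.1, if_neg hzi] at hui
      exact hi.1 hui.symm
  have tie3 : ∀ i i', (x i ≠ 0 ∧ y i = 0) → (x i' ≠ 0 ∧ y i' = 0) →
      ∀ z ∈ M, ∀ z' ∈ M, z i ≠ 0 → z' i ≠ 0 → z i ≠ z' i → z i' ≠ z' i' := by
    intro i i' hi hi' z hz z' hz' hzi hz'i hne heq
    have hzi' : z i' ≠ 0 := tie2 i i' hi hi' z hz hzi
    have huM : sqcup z z' ∈ M := (hM.2 z hz z' hz').2
    have hui' : sqcup z z' i' = z i' := by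
      rw [sqcup_apply, if_pos heq]
    have : sqcup z z' i ≠ 0 := tie2 i' i hi' hi _ huM (by rw [hui']; exact hzi')
    apply this
    rw [sqcup_apply, if_neg hne, if_neg hzi, if_neg hz'i]
  clear hxD hnorm
  -- delete coordinate i₁
  obtain ⟨m, rfl⟩ : ∃ m, n = m + 1 := ⟨n - 1, (Nat.succ_pred_eq_of_pos hn).symm⟩
  have hm : 0 < m := by
    rcases Nat.eq_zero_or_pos m with h | h
    · subst h
      have a1 := i₁.isLt
      have a2 := i₂.isLt
      exact absurd (Fin.ext (by omega)) hne12
    · exact h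
  set π : (Fin (m + 1) → Fin (k + 1)) → (Fin m → Fin (k + 1)) :=
    fun z j => z (i₁.succAbove j) with hπ
  obtain ⟨j₂, hj₂⟩ := Fin.exists_succAbove_eq (Ne.symm hne12)
  have hGi₁ : x i₁ ≠ 0 ∧ y i₁ = 0 := ⟨hxi₁, hyi₁⟩
  have hGi₂ : x i₂ ≠ 0 ∧ y i₂ = 0 := ⟨hxi₂, hyi₂⟩
  -- order is reflected by π
  have hpre_iff : ∀ z ∈ M, ∀ z' ∈ M, (preV z z' ↔ preV (π z) (π z')) := by
    intro z hz z' hz'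
    constructor
    · intro h j
      exact h _
    · intro h i
      by_cases hii : i = i₁
      · subst hii
        by_cases hz0 : z i = 0
        · exact Or.inl hz0
        · have hzi2 : z i₂ ≠ 0 := tie2 i i₂ hGi₁ hGi₂ z hz hz0
          have hpre2 : pre (z i₂) (z' i₂) := by
            have h2 := h j₂
            simp only [hπ] at h2
            rwa [hj₂] at h2
          have hz'i2 : z' i₂ = z i₂ := (hpre2.resolve_left hzi2).symm
          have hz'1 : z' i ≠ 0 := tie2 i₂ i hGi₂ hGi₁ z' hz' (by rw [hz'i2]; exact hzi2)
          by_cases he : z i = z' i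
          · exact Or.inr he
          · exact absurd hz'i2.symm (tie3 i i₂ hGi₁ hGi₂ z hz z' hz' hz0 hz'1 he)
      · obtain ⟨j, hj⟩ := Fin.exists_succAbove_eq hii
        have h2 := h j
        simp only [hπ] at h2
        rwa [hj] at h2
  -- incons is preserved and reflected by π
  have hinc_iff : ∀ z ∈ M, ∀ z' ∈ M, (incons z z' ↔ incons (π z) (π z')) := by
    intro z hz z' hz'
    constructor
    · rintro ⟨i, h1, h2, h3⟩
      by_cases hii : i = i₁
      · subst hii
        refine ⟨j₂, ?_, ?_, ?_⟩ <;> simp only [hπ] <;> rw [hj₂]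
        · exact tie2 i i₂ hGi₁ hGi₂ z hz h1
        · exact tie2 i i₂ hGi₁ hGi₂ z' hz' h2
        · exact tie3 i i₂ hGi₁ hGi₂ z hz z' hz' h1 h2 h3
      · obtain ⟨j, hj⟩ := Fin.exists_succAbove_eq hii
        refine ⟨j, ?_, ?_, ?_⟩ <;> simp only [hπ] <;> rw [hj]
        · exact h1
        · exact h2
        · exact h3
    · rintro ⟨j, h1, h2, h3⟩
      simp only [hπ] at h1 h2 h3
      exact ⟨_, h1, h2, h3⟩
  have hcap : ∀ z z', sqcap (π z) (π z') = π (sqcap z z') := fun z z' => rfl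
  have hcup : ∀ z z', sqcup (π z) (π z') = π (sqcup z z') := fun z z' => rfl
  have hM₁ : closedSet (π '' M) := by
    constructor
    · exact ⟨π x, ⟨x, hxM, rfl⟩⟩
    · rintro _ ⟨z, hz, rfl⟩ _ ⟨z', hz', rfl⟩
      exact ⟨⟨sqcap z z', (hM.2 z hz z' hz').1, (hcap z z').symm⟩,
        ⟨sqcup z z', (hM.2 z hz z' hz').2, (hcup z z').symm⟩⟩
  have hs₁ : simpleSet (π '' M) := by
    constructor
    · exact ⟨fun _ => 0, hs.1, rfl⟩
    · rintro _ ⟨z, hz, rfl⟩ i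
      exact Or.inl rfl
  obtain ⟨n', hn', M', φ', hc', hnm', hbij', hiff'⟩ :=
    IH m (Nat.lt_succ_self m) hm (π '' M) hM₁ hs₁
  have hπbij : Set.BijOn π M (π '' M) := by
    refine ⟨fun z hz => Set.mem_image_of_mem _ hz, ?_, Set.surjOn_image _ _⟩
    intro z hz z' hz' he
    have p1 : preV z z' := (hpre_iff z hz z' hz').mpr (he ▸ preV_refl (π z))
    have p2 : preV z' z := (hpre_iff z' hz' z hz).mpr (he ▸ preV_refl (π z))
    exact preV_antisymm p1 p2
  refine ⟨n', hn', M', φ' ∘ π, hc', hnm', hbij'.comp hπbij, ?_⟩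
  intro a ha b hb
  have h₁ := hiff' (π a) (Set.mem_image_of_mem _ ha) (π b) (Set.mem_image_of_mem _ hb)
  exact ⟨(hpre_iff a ha b hb).trans h₁.1, (hinc_iff a ha b hb).trans h₁.2⟩

/-- Every `(⊓,⊔)`-closed set is isomorphic, with respect to `⪯` and `⌣`, to a
normalized `(⊓,⊔)`-closed set. -/
theorem exists_normalized_iso (k n : ℕ) (hk : 0 < k) (hn : 0 < n)
    (M : Set (Fin n → Fin (k + 1))) (hM : closedSet M) :
    ∃ (k' n' : ℕ), 0 < k' ∧ 0 < n' ∧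
      ∃ (M' : Set (Fin n' → Fin (k' + 1)))
        (φ : (Fin n → Fin (k + 1)) → (Fin n' → Fin (k' + 1))),
        closedSet M' ∧ normalizedSet M' ∧ Set.BijOn φ M M' ∧
        ∀ x ∈ M, ∀ y ∈ M,
          (preV x y ↔ preV (φ x) (φ y)) ∧ (incons x y ↔ incons (φ x) (φ y)) := by
  classical
  obtain ⟨m₀, hm₀M, hm₀⟩ := exists_min hM
  set g : (Fin n → Fin (k + 1)) → (Fin n → Fin (k + 1)) :=
    fun z i => if ∀ w ∈ M, w i ≠ 0 then 0 else z i with hg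
  have hconst : ∀ i, (∀ w ∈ M, w i ≠ 0) → ∀ z ∈ M, ∀ z' ∈ M, z i = z' i := by
    intro i hP z hz z' hz'
    by_contra hne
    have h1 : sqcap z z' i ≠ 0 := hP _ ((hM.2 z hz z' hz').1)
    rw [sqcap_apply, if_neg hne] at h1
    exact h1 rfl
  have hg0 : g m₀ = fun _ => 0 := by
    funext i
    simp only [hg]
    split
    · rfl
    · next h =>
      push_neg at h
      obtain ⟨w, hw, hwi⟩ := h
      rcases hm₀ w hw i with h' | h'
      · exact h'
      · rw [h', hwi]
  have hgpre : ∀ z ∈ M, ∀ z' ∈ M, (preV z z' ↔ preV (g z) (g z')) := by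
    intro z hz z' hz'
    constructor
    · intro h i
      simp only [hg]
      by_cases hP : ∀ w ∈ M, w i ≠ 0
      · rw [if_pos hP]
        exact Or.inl rfl
      · rw [if_neg hP, if_neg hP]
        exact h i
    · intro h i
      have h2 := h i
      simp only [hg] at h2
      by_cases hP : ∀ w ∈ M, w i ≠ 0
      · exact Or.inr (hconst i hP z hz z' hz')
      · rwa [if_neg hP, if_neg hP] at h2
  have hginc : ∀ z ∈ M, ∀ z' ∈ M, (incons z z' ↔ incons (g z) (g z')) := by
    intro z hz z' hz'
    constructor
    · rintro ⟨i, h1, h2, h3⟩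
      have hP : ¬∀ w ∈ M, w i ≠ 0 := fun hP => h3 (hconst i hP z hz z' hz')
      refine ⟨i, ?_, ?_, ?_⟩ <;> simp only [hg] <;> rw [if_neg hP]
      · exact h1
      · exact h2
      · rw [if_neg hP]
        exact h3
    · rintro ⟨i, h1, h2, h3⟩
      simp only [hg] at h1 h2 h3
      by_cases hP : ∀ w ∈ M, w i ≠ 0
      · rw [if_pos hP] at h1
        exact absurd rfl h1
      · rw [if_neg hP] at h1 h2
        rw [if_neg hP, if_neg hP] at h3
        exact ⟨i, h1, h2, h3⟩
  have hgcap : ∀ z z', sqcap (g z) (g z') = g (sqcap z z') := by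
    intro z z'
    funext i
    by_cases hP : ∀ w ∈ M, w i ≠ 0
    · simp only [sqcap_apply, hg, if_pos hP]
      simp
    · simp only [sqcap_apply, hg, if_neg hP]
  have hgcup : ∀ z z', sqcup (g z) (g z') = g (sqcup z z') := by
    intro z z'
    funext i
    by_cases hP : ∀ w ∈ M, w i ≠ 0
    · simp only [sqcup_apply, hg, if_pos hP]
      simp
    · simp only [sqcup_apply, hg, if_neg hP]
  have hgM : closedSet (g '' M) := by
    constructor
    · exact ⟨g m₀, ⟨m₀, hm₀M, rfl⟩⟩
    · rintro _ ⟨z, hz, rfl⟩ _ ⟨z', hz', rfl⟩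
      exact ⟨⟨sqcap z z', (hM.2 z hz z' hz').1, (hgcap z z').symm⟩,
        ⟨sqcup z z', (hM.2 z hz z' hz').2, (hgcup z z').symm⟩⟩
  have hgS : simpleSet (g '' M) := by
    constructor
    · exact ⟨m₀, hm₀M, hg0⟩
    · rintro _ ⟨z, hz, rfl⟩ i
      exact Or.inl rfl
  obtain ⟨n', hn', M', φ', hc', hnm', hbij', hiff'⟩ := norm_ind k n hn (g '' M) hgM hgS
  have hgbij : Set.BijOn g M (g '' M) := by
    refine ⟨fun z hz => Set.mem_image_of_mem _ hz, ?_, Set.surjOn_image _ _⟩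
    intro z hz z' hz' he
    have p1 : preV z z' := (hgpre z hz z' hz').mpr (he ▸ preV_refl (g z))
    have p2 : preV z' z := (hgpre z' hz' z hz).mpr (he ▸ preV_refl (g z))
    exact preV_antisymm p1 p2
  refine ⟨k, n', hk, hn', M', φ' ∘ g, hc', hnm', hbij'.comp hgbij, ?_⟩
  intro a ha b hb
  have h₁ := hiff' (g a) (Set.mem_image_of_mem _ ha) (g b) (Set.mem_image_of_mem _ hb)
  exact ⟨(hgpre a ha b hb).trans h₁.1, (hginc a ha b hb).trans h₁.2⟩
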